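/- arXiv:2510.27323 — 4 statements merged into one kernel-verified Lean document; each statement's English description precedes it below -/
import Mathlib

section
/- Let (T_k) be i.i.d. Exp(1) random variables, S_k = T_1 + ... + T_k. For any α ∈ (0,1] and β ≥ 0 there exists C = C(α,β) > 0 such that for all ε > 0, k ≥ 1, and r ∈ [(k-1)ε, kε], E|r^α - (ε S_k)^α|^β ≤ C (kε)^{αβ} k^{-β/2}. -/
open MeasureTheory ProbabilityTheory Real Set

/-!
By homogeneity, `|r^α - (ε s)^α|^β = ε^{αβ} |ρ^α - s^α|^β` with `ρ = r/ε ∈ [k-1, k]`, so it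
suffices to treat `ε = 1`. On `{S_k > k/2}` the concavity bound with `c = k/2` gives
`|ρ^α - S_k^α| ≤ (k/2)^{α-1} |S_k - ρ|`, and `E|S_k - ρ|^β ≲ k^{β/2}` because the Gamma mgf
`(1-t)^{-k}` yields `E exp(±(S_k - k)/(2√k)) ≤ e^{1/2}`. On `{S_k ≤ k/2}` the difference is at
most `k^α`, while the Chernoff bound gives `P(S_k ≤ k/2) ≤ e^{-(log 2 - 1/2) k} ≲ k^{-β/2}`.
-/

namespace Real

lemma abs_rpow_sub_rpow_le_mul_abs_sub {α a b c : ℝ} (hα0 : 0 < α) (hα1 : α ≤ 1)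
    (ha : 0 ≤ a) (hb : 0 ≤ b) (hc : 0 < c) (hcab : c ≤ max a b) :
    |a ^ α - b ^ α| ≤ c ^ (α - 1) * |a - b| := by
  wlog hba : b ≤ a generalizing a b
  · rw [abs_sub_comm, abs_sub_comm a]
    exact this hb ha (max_comm a b ▸ hcab) (le_of_not_ge hba)
  have hca : c ≤ a := max_eq_left hba ▸ hcab
  have ha0 : 0 < a := hc.trans_le hca
  have hb_le : a ^ (α - 1) * b ≤ b ^ α := by
    rcases hb.eq_or_lt with rfl | hb0
    · simp [zero_rpow hα0.ne']
    calc a ^ (α - 1) * b ≤ b ^ (α - 1) * b :=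
          mul_le_mul_of_nonneg_right (rpow_le_rpow_of_nonpos hb0 hba (by linarith)) hb
      _ = b ^ α := by rw [← rpow_add_one hb0.ne', sub_add_cancel]
  rw [abs_of_nonneg (sub_nonneg.2 (rpow_le_rpow hb hba hα0.le)), abs_of_nonneg (sub_nonneg.2 hba)]
  calc a ^ α - b ^ α ≤ a ^ (α - 1) * (a - b) := by
        rw [mul_sub, ← rpow_add_one ha0.ne', sub_add_cancel]; linarith
    _ ≤ c ^ (α - 1) * (a - b) :=
        mul_le_mul_of_nonneg_right (rpow_le_rpow_of_nonpos hc hca (by linarith)) (by linarith)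

lemma rpow_le_mul_exp {γ c u : ℝ} (hγ : 0 ≤ γ) (hc : 0 < c) (hu : 0 ≤ u) :
    u ^ γ ≤ (γ / c) ^ γ * exp (c * u) := by
  rcases hγ.eq_or_lt with rfl | hγ0
  · simpa using one_le_exp (by positivity)
  calc u ^ γ = (γ / c) ^ γ * (c * u / γ) ^ γ := by
        rw [← mul_rpow (by positivity) (by positivity)]; field_simp
    _ ≤ (γ / c) ^ γ * exp (c * u / γ) ^ γ := by
        gcongr; linarith [add_one_le_exp (c * u / γ)]
    _ = (γ / c) ^ γ * exp (c * u) := by rw [← exp_mul, div_mul_cancel₀ _ hγ0.ne']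

lemma exp_neg_mul_le_mul_rpow_neg {γ c u : ℝ} (hγ : 0 ≤ γ) (hc : 0 < c) (hu : 0 < u) :
    exp (-(c * u)) ≤ (γ / c) ^ γ * u ^ (-γ) := by
  rw [exp_neg, rpow_neg hu.le, ← div_eq_mul_inv, le_div_iff₀ (by positivity), inv_mul_eq_div,
    div_le_iff₀' (exp_pos _), mul_comm]
  exact rpow_le_mul_exp hγ hc hu.le

lemma abs_sub_rpow_le_mul_exp_add_exp {β t x ρ κ : ℝ} (hβ : 0 ≤ β) (ht : 0 < t) :
    |x - ρ| ^ β ≤ (β / t) ^ β * exp (t * |κ - ρ|) * (exp (t * (x - κ)) + exp (-t * (x - κ))) := by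
  calc |x - ρ| ^ β ≤ (β / t) ^ β * exp (t * |x - ρ|) := rpow_le_mul_exp hβ ht (abs_nonneg _)
    _ ≤ (β / t) ^ β * exp (t * |κ - ρ| + |t * (x - κ)|) := by
      gcongr
      rw [abs_mul, abs_of_pos ht, ← mul_add]
      gcongr
      exact (abs_sub_le x κ ρ).trans_eq (add_comm _ _)
    _ ≤ (β / t) ^ β * exp (t * |κ - ρ|) * (exp (t * (x - κ)) + exp (-t * (x - κ))) := by
      rw [exp_add, mul_assoc]
      gcongr
      simpa [neg_mul] using exp_abs_le (t * (x - κ))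

lemma exp_neg_mul_inv_one_sub_le {t : ℝ} (ht : |t| ≤ 1 / 2) :
    exp (-t) * (1 - t)⁻¹ ≤ exp (2 * t ^ 2) := by
  have h1t : 0 < 1 - t := by linarith [le_abs_self t]
  have hlog : -t - 2 * t ^ 2 ≤ log (1 - t) := by
    have h := abs_log_sub_add_sum_range_le (lt_of_le_of_lt ht (by norm_num)) 1
    simp only [Finset.sum_range_one, zero_add, pow_one, Nat.cast_zero, div_one] at h
    have h2 : |t| ^ 2 / (1 - |t|) ≤ 2 * t ^ 2 := by
      rw [div_le_iff₀ (by linarith), sq_abs]; nlinarith [sq_nonneg t]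
    linarith [neg_abs_le (t + log (1 - t))]
  calc exp (-t) * (1 - t)⁻¹ = exp (-t - log (1 - t)) := by
        rw [exp_sub, exp_log h1t, div_eq_mul_inv]
    _ ≤ exp (2 * t ^ 2) := exp_le_exp.2 (by linarith)

lemma abs_rpow_sub_rpow_rpow_le {α β κ ρ s : ℝ} (hα0 : 0 < α) (hα1 : α ≤ 1) (hβ : 0 ≤ β)
    (hκ : 0 < κ) (hρ0 : 0 ≤ ρ) (hρκ : ρ ≤ κ) (hs : 0 ≤ s) :
    |ρ ^ α - s ^ α| ^ β ≤
      (Iic (κ / 2)).indicator (fun _ => κ ^ (α * β)) s + (κ / 2) ^ ((α - 1) * β) * |s - ρ| ^ β := by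
  by_cases hsκ : s ≤ κ / 2
  · rw [indicator_of_mem (mem_Iic.2 hsκ), rpow_mul hκ.le]
    have hρα := rpow_le_rpow hρ0 hρκ hα0.le
    have hsα := rpow_le_rpow hs (hsκ.trans (half_le_self hκ.le)) hα0.le
    have hdiff : |ρ ^ α - s ^ α| ≤ κ ^ α := by
      rw [abs_sub_le_iff]
      constructor <;> linarith [rpow_nonneg hρ0 α, rpow_nonneg hs α]
    have := rpow_le_rpow (abs_nonneg _) hdiff hβ
    have : 0 ≤ (κ / 2) ^ ((α - 1) * β) * |s - ρ| ^ β := by positivity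
    linarith
  · rw [indicator_of_notMem (by simpa using hsκ), zero_add, rpow_mul (by positivity),
      ← mul_rpow (by positivity) (abs_nonneg _), abs_sub_comm s]
    gcongr
    exact abs_rpow_sub_rpow_le_mul_abs_sub hα0 hα1 hρ0 hs (by positivity)
      (le_max_of_le_right (by linarith))

lemma abs_rpow_sub_mul_rpow_rpow {α β ε r s : ℝ} (hε : 0 < ε) (hr : 0 ≤ r) (hs : 0 ≤ s) :
    |r ^ α - (ε * s) ^ α| ^ β = ε ^ (α * β) * |(r / ε) ^ α - s ^ α| ^ β := by
  conv_lhs => rw [← mul_div_cancel₀ r hε.ne']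
  rw [mul_rpow hε.le (div_nonneg hr hε.le), mul_rpow hε.le hs, ← mul_sub, abs_mul,
    abs_of_pos (rpow_pos_of_pos hε α), mul_rpow (by positivity) (abs_nonneg _), rpow_mul hε.le]

end Real

lemma mgf_id_expMeasure_one {s : ℝ} (hs : s < 1) : mgf id (expMeasure 1) s = (1 - s)⁻¹ := by
  have hdens : ∀ x, (gammaPDF 1 1 x).toReal * exp (s * x) =
      (Ici (0 : ℝ)).indicator (fun x => exp ((s - 1) * x)) x := by
    intro x
    rcases lt_or_ge x 0 with hx | hx
    · simp [gammaPDF_of_neg hx, hx]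
    · rw [gammaPDF_of_nonneg hx, ENNReal.toReal_ofReal (by positivity),
        indicator_of_mem (mem_Ici.2 hx)]
      simp only [rpow_one, Gamma_one, div_one, sub_self, rpow_zero, one_mul, mul_one, ← exp_add]
      ring_nf
  have hmeas : Measurable (gammaPDF 1 1) := (measurable_gammaPDFReal 1 1).ennreal_ofReal
  rw [mgf, expMeasure, gammaMeasure, integral_withDensity_eq_integral_toReal_smul hmeas
    (ae_of_all _ fun _ => ENNReal.ofReal_lt_top)]
  simp only [id, smul_eq_mul, hdens]
  rw [integral_indicator measurableSet_Ici, integral_Ici_eq_integral_Ioi,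
    integral_exp_mul_Ioi (by linarith)]
  rw [mul_zero, exp_zero, neg_div, one_div, ← inv_neg, neg_sub]

lemma integral_abs_rpow_sub_rpow_rpow_le {Ω : Type*} [MeasurableSpace Ω] {P : Measure Ω}
    [IsFiniteMeasure P] {S : Ω → ℝ} (hS : Measurable S) (hS0 : ∀ᵐ ω ∂P, 0 ≤ S ω)
    {α β κ ρ : ℝ} (hα0 : 0 < α) (hα1 : α ≤ 1) (hβ : 0 ≤ β) (hκ : 0 < κ) (hρ0 : 0 ≤ ρ)
    (hρκ : ρ ≤ κ) (hint : Integrable (fun ω => |S ω - ρ| ^ β) P) :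
    ∫ ω, |ρ ^ α - S ω ^ α| ^ β ∂P ≤
      κ ^ (α * β) * P.real {ω | S ω ≤ κ / 2} + (κ / 2) ^ ((α - 1) * β) * ∫ ω, |S ω - ρ| ^ β ∂P := by
  have hE : MeasurableSet (S ⁻¹' Iic (κ / 2)) := hS measurableSet_Iic
  have hind : Integrable ((S ⁻¹' Iic (κ / 2)).indicator fun _ => κ ^ (α * β)) P :=
    (integrable_const _).indicator hE
  calc ∫ ω, |ρ ^ α - S ω ^ α| ^ β ∂P
      ≤ ∫ ω, ((S ⁻¹' Iic (κ / 2)).indicator (fun _ => κ ^ (α * β)) ω +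
          (κ / 2) ^ ((α - 1) * β) * |S ω - ρ| ^ β) ∂P := by
        refine integral_mono_of_nonneg (ae_of_all _ fun ω => by positivity)
          (hind.add (hint.const_mul _)) ?_
        filter_upwards [hS0] with ω hω
        exact abs_rpow_sub_rpow_rpow_le hα0 hα1 hβ hκ hρ0 hρκ hω
    _ = κ ^ (α * β) * P.real {ω | S ω ≤ κ / 2} +
          (κ / 2) ^ ((α - 1) * β) * ∫ ω, |S ω - ρ| ^ β ∂P := by
        rw [integral_add hind (hint.const_mul _), integral_indicator_const _ hE, integral_const_mul,
          smul_eq_mul, mul_comm]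
        rfl

section SumOfExponentials

variable {Ω : Type*} [MeasurableSpace Ω] {P : Measure Ω} {T : ℕ → Ω → ℝ}

lemma mgf_of_map_eq_expMeasure {X : Ω → ℝ} (hX : Measurable X) (hdist : P.map X = expMeasure 1)
    {s : ℝ} (hs : s < 1) : mgf X P s = (1 - s)⁻¹ := by
  rw [← mgf_id_map hX.aemeasurable, hdist, mgf_id_expMeasure_one hs]

lemma ae_nonneg_of_map_eq_expMeasure {X : Ω → ℝ} (hX : Measurable X)
    (hdist : P.map X = expMeasure 1) : ∀ᵐ ω ∂P, 0 ≤ X ω := by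
  have h : P.map X (Iio 0) = 0 := by
    rw [hdist, expMeasure, gammaMeasure, withDensity_apply _ measurableSet_Iio]
    exact lintegral_gammaPDF_of_nonpos le_rfl
  rw [Measure.map_apply hX measurableSet_Iio] at h
  rw [ae_iff]
  simp only [not_le]
  exact h

lemma ae_sum_range_nonneg_of_expMeasure (hmeas : ∀ i, Measurable (T i))
    (hdist : ∀ i, P.map (T i) = expMeasure 1) (k : ℕ) :
    ∀ᵐ ω ∂P, 0 ≤ ∑ i ∈ Finset.range k, T i ω := by
  filter_upwards [ae_all_iff.2 fun i => ae_nonneg_of_map_eq_expMeasure (hmeas i) (hdist i)]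
    with ω hω
  exact Finset.sum_nonneg fun i _ => hω i

lemma mgf_sum_range_of_expMeasure (hmeas : ∀ i, Measurable (T i)) (hindep : iIndepFun T P)
    (hdist : ∀ i, P.map (T i) = expMeasure 1) (k : ℕ) {s : ℝ} (hs : s < 1) :
    mgf (fun ω => ∑ i ∈ Finset.range k, T i ω) P s = (1 - s)⁻¹ ^ k := by
  have h := hindep.mgf_sum hmeas (Finset.range k) (t := s)
  simp only [mgf_of_map_eq_expMeasure (hmeas _) (hdist _) hs, Finset.prod_const,
    Finset.card_range] at h
  rw [← h]
  congr 1
  ext ω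
  simp

lemma mgf_sum_range_sub_le_of_expMeasure (hmeas : ∀ i, Measurable (T i))
    (hindep : iIndepFun T P) (hdist : ∀ i, P.map (T i) = expMeasure 1) (k : ℕ) {t : ℝ}
    (ht : |t| ≤ 1 / 2) :
    mgf (fun ω => ∑ i ∈ Finset.range k, T i ω - k) P t ≤ exp (2 * t ^ 2 * k) := by
  have ht1 : t < 1 := by linarith [le_abs_self t]
  simp_rw [sub_eq_add_neg]
  rw [mgf_add_const, mgf_sum_range_of_expMeasure hmeas hindep hdist k ht1]
  calc (1 - t)⁻¹ ^ k * exp (t * -k) = (exp (-t) * (1 - t)⁻¹) ^ k := by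
        rw [mul_pow, ← exp_nat_mul, mul_comm]; ring_nf
    _ ≤ exp (2 * t ^ 2) ^ k := by gcongr; exact exp_neg_mul_inv_one_sub_le ht
    _ = exp (2 * t ^ 2 * k) := by rw [← exp_nat_mul, mul_comm]

lemma integrable_exp_mul_sum_range_sub (hmeas : ∀ i, Measurable (T i)) (hindep : iIndepFun T P)
    (hdist : ∀ i, P.map (T i) = expMeasure 1) (k : ℕ) {t : ℝ} (ht : t < 1) :
    Integrable (fun ω => exp (t * (∑ i ∈ Finset.range k, T i ω - k))) P := by
  have := hindep.isProbabilityMeasure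
  refine mgf_pos_iff.1 ?_
  simp_rw [sub_eq_add_neg]
  rw [mgf_add_const, mgf_sum_range_of_expMeasure hmeas hindep hdist k ht]
  have : 0 < 1 - t := by linarith
  positivity

-- `t = (2 √k)⁻¹` makes `2 t² k = 1/2`, so the exponential moments at `±t` are bounded in `k`
lemma integral_abs_sum_range_sub_rpow_le (hmeas : ∀ i, Measurable (T i))
    (hindep : iIndepFun T P) (hdist : ∀ i, P.map (T i) = expMeasure 1) {β ρ : ℝ} (hβ : 0 ≤ β)
    {k : ℕ} (hk : 1 ≤ k) (hρ : |ρ - k| ≤ 1) :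
    Integrable (fun ω => |∑ i ∈ Finset.range k, T i ω - ρ| ^ β) P ∧
      ∫ ω, |∑ i ∈ Finset.range k, T i ω - ρ| ^ β ∂P ≤ 2 * exp 1 * (2 * β) ^ β * k ^ (β / 2) := by
  set S := fun ω => ∑ i ∈ Finset.range k, T i ω
  have hk0 : (1 : ℝ) ≤ k := by exact_mod_cast hk
  set t := (2 * √k)⁻¹ with ht_def
  have ht0 : 0 < t := by positivity
  have ht_half : |t| ≤ 1 / 2 := by
    rw [abs_of_pos ht0, ht_def, one_div]
    gcongr
    linarith [one_le_sqrt.2 hk0]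
  have htk : 2 * t ^ 2 * k = 1 / 2 := by
    rw [ht_def, inv_pow, mul_pow, sq_sqrt (by positivity)]; field_simp
  set g := fun ω => exp (t * (S ω - k)) + exp (-t * (S ω - k))
  have hplus := integrable_exp_mul_sum_range_sub hmeas hindep hdist k (t := t)
    (by linarith [le_abs_self t])
  have hminus := integrable_exp_mul_sum_range_sub hmeas hindep hdist k (t := -t) (by linarith)
  have hg : Integrable g P := hplus.add hminus
  have hbound : ∀ ω, |S ω - ρ| ^ β ≤ (β / t) ^ β * exp (1 / 2) * g ω := fun ω =>
    (abs_sub_rpow_le_mul_exp_add_exp hβ ht0).trans <| by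
      gcongr
      rw [abs_sub_comm]
      nlinarith [abs_le.1 ht_half]
  have hint : Integrable (fun ω => |S ω - ρ| ^ β) P := by
    refine (hg.const_mul ((β / t) ^ β * exp (1 / 2))).mono' ?_ (ae_of_all _ fun ω => ?_)
    · exact (((Finset.measurable_sum _ fun i _ => hmeas i).sub_const ρ).abs.pow_const
        β).aestronglyMeasurable
    · rw [norm_of_nonneg (by positivity)]
      exact hbound ω
  refine ⟨hint, ?_⟩
  calc ∫ ω, |S ω - ρ| ^ β ∂P ≤ ∫ ω, (β / t) ^ β * exp (1 / 2) * g ω ∂P :=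
        integral_mono hint (hg.const_mul _) hbound
    _ = (β / t) ^ β * exp (1 / 2) *
          (mgf (fun ω => S ω - k) P t + mgf (fun ω => S ω - k) P (-t)) := by
        rw [integral_const_mul, integral_add hplus hminus]; rfl
    _ ≤ (β / t) ^ β * exp (1 / 2) * (exp (1 / 2) + exp (1 / 2)) := by
        gcongr
        · simpa [htk] using mgf_sum_range_sub_le_of_expMeasure hmeas hindep hdist k ht_half
        · have h := mgf_sum_range_sub_le_of_expMeasure hmeas hindep hdist k
            ((abs_neg t).symm ▸ ht_half)
          rwa [neg_sq, htk] at h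
    _ = 2 * exp 1 * (2 * β) ^ β * k ^ (β / 2) := by
        have hβt : (β / t) ^ β = (2 * β) ^ β * k ^ (β / 2) := by
          rw [ht_def, div_inv_eq_mul, ← mul_assoc, mul_comm β 2, mul_rpow (by positivity)
            (sqrt_nonneg _), sqrt_eq_rpow, ← rpow_mul (Nat.cast_nonneg _), one_div_mul_eq_div]
        have he : exp (1 / 2) * exp (1 / 2) = exp 1 := by rw [← exp_add]; norm_num
        rw [hβt]
        linear_combination (2 * (2 * β) ^ β * k ^ (β / 2)) * he

lemma measureReal_sum_range_le_half_le (hmeas : ∀ i, Measurable (T i)) (hindep : iIndepFun T P)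
    (hdist : ∀ i, P.map (T i) = expMeasure 1) {β : ℝ} (hβ : 0 ≤ β) {k : ℕ} (hk : 1 ≤ k) :
    P.real {ω | ∑ i ∈ Finset.range k, T i ω ≤ k / 2} ≤
      (β / 2 / (log 2 - 1 / 2)) ^ (β / 2) * k ^ (-(β / 2)) := by
  have := hindep.isProbabilityMeasure
  have hc : 0 < log 2 - 1 / 2 := by linarith [log_two_gt_d9]
  have hmgf := mgf_sum_range_of_expMeasure hmeas hindep hdist k (s := -1) (by norm_num)
  have hint : Integrable (fun ω => exp (-1 * ∑ i ∈ Finset.range k, T i ω)) P :=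
    mgf_pos_iff.1 (by rw [hmgf]; norm_num)
  have hchernoff := measure_le_le_exp_mul_mgf (k / 2 : ℝ) (by norm_num) hint
  calc P.real {ω | ∑ i ∈ Finset.range k, T i ω ≤ k / 2}
      ≤ exp (- -1 * (k / 2)) * mgf (fun ω => ∑ i ∈ Finset.range k, T i ω) P (-1) := hchernoff
    _ = exp (-((log 2 - 1 / 2) * k)) := by
        rw [hmgf, show (1 : ℝ) - -1 = exp (log 2) by norm_num [exp_log], ← exp_neg, ← exp_nat_mul,
          ← exp_add]
        ring_nf
    _ ≤ (β / 2 / (log 2 - 1 / 2)) ^ (β / 2) * k ^ (-(β / 2)) :=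
        exp_neg_mul_le_mul_rpow_neg (by positivity) hc (by exact_mod_cast hk)

lemma integral_abs_rpow_sub_sum_range_rpow_le (hmeas : ∀ i, Measurable (T i))
    (hindep : iIndepFun T P) (hdist : ∀ i, P.map (T i) = expMeasure 1) {α β : ℝ} (hα0 : 0 < α)
    (hα1 : α ≤ 1) (hβ : 0 ≤ β) {k : ℕ} (hk : 1 ≤ k) {ρ : ℝ} (hρ1 : (k : ℝ) - 1 ≤ ρ)
    (hρ2 : ρ ≤ k) :
    ∫ ω, |ρ ^ α - (∑ i ∈ Finset.range k, T i ω) ^ α| ^ β ∂P ≤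
      ((β / 2 / (log 2 - 1 / 2)) ^ (β / 2) + 2 ^ ((1 - α) * β) * (2 * exp 1 * (2 * β) ^ β)) *
        k ^ (α * β) * k ^ (-(β / 2)) := by
  have := hindep.isProbabilityMeasure
  have hk1 : (1 : ℝ) ≤ k := by exact_mod_cast hk
  have hk0 : (0 : ℝ) < k := by linarith
  obtain ⟨hint, hmoment⟩ := integral_abs_sum_range_sub_rpow_le hmeas hindep hdist hβ hk
    (abs_le.2 ⟨by linarith, by linarith⟩)
  have hpow : (k / 2 : ℝ) ^ ((α - 1) * β) * k ^ (β / 2) =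
      2 ^ ((1 - α) * β) * (k ^ (α * β) * k ^ (-(β / 2))) := by
    rw [div_rpow hk0.le zero_le_two, ← rpow_add hk0, show (1 - α) * β = -((α - 1) * β) by ring,
      rpow_neg zero_le_two, div_mul_eq_mul_div, ← rpow_add hk0,
      show (α - 1) * β + β / 2 = α * β + -(β / 2) by ring, div_eq_inv_mul]
  calc ∫ ω, |ρ ^ α - (∑ i ∈ Finset.range k, T i ω) ^ α| ^ β ∂P
      ≤ k ^ (α * β) * P.real {ω | ∑ i ∈ Finset.range k, T i ω ≤ k / 2} +
          (k / 2) ^ ((α - 1) * β) * ∫ ω, |∑ i ∈ Finset.range k, T i ω - ρ| ^ β ∂P :=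
        integral_abs_rpow_sub_rpow_rpow_le (Finset.measurable_sum _ fun i _ => hmeas i)
          (ae_sum_range_nonneg_of_expMeasure hmeas hdist k) hα0 hα1 hβ hk0 (by linarith) hρ2 hint
    _ ≤ k ^ (α * β) * ((β / 2 / (log 2 - 1 / 2)) ^ (β / 2) * k ^ (-(β / 2))) +
          (k / 2) ^ ((α - 1) * β) * (2 * exp 1 * (2 * β) ^ β * k ^ (β / 2)) := by
        gcongr
        exact measureReal_sum_range_le_half_le hmeas hindep hdist hβ hk
    _ = _ := by linear_combination (2 * exp 1 * (2 * β) ^ β) * hpow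

end SumOfExponentials

theorem stmt_1_general {Ω : Type*} [MeasurableSpace Ω] (P : Measure Ω)
    (T : ℕ → Ω → ℝ) (hmeas : ∀ i, Measurable (T i))
    (hindep : iIndepFun T P)
    (hdist : ∀ i, P.map (T i) = expMeasure 1)
    (α β : ℝ) (hα0 : 0 < α) (hα1 : α ≤ 1) (hβ : 0 ≤ β) :
    ∃ C > 0, ∀ (ε : ℝ) (k : ℕ), 0 < ε → 1 ≤ k →
      ∀ r ∈ Set.Icc (((k : ℝ) - 1) * ε) ((k : ℝ) * ε),
        (∫ ω, |r ^ α - (ε * ∑ i ∈ Finset.range k, T i ω) ^ α| ^ β ∂P) ≤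
          C * ((k : ℝ) * ε) ^ (α * β) * (k : ℝ) ^ (-(β / 2)) := by
  set C := (β / 2 / (log 2 - 1 / 2)) ^ (β / 2) + 2 ^ ((1 - α) * β) * (2 * exp 1 * (2 * β) ^ β)
  have hC : 0 < C := by
    have : 0 < log 2 - 1 / 2 := by linarith [log_two_gt_d9]
    rcases hβ.eq_or_lt with rfl | hβ0
    · simp only [C]; norm_num; positivity
    · positivity
  refine ⟨C, hC, fun ε k hε hk r ⟨hr1, hr2⟩ => ?_⟩
  have hk0 : (0 : ℝ) < k := by exact_mod_cast hk
  calc ∫ ω, |r ^ α - (ε * ∑ i ∈ Finset.range k, T i ω) ^ α| ^ β ∂P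
      = ε ^ (α * β) * ∫ ω, |(r / ε) ^ α - (∑ i ∈ Finset.range k, T i ω) ^ α| ^ β ∂P := by
        rw [← integral_const_mul]
        refine integral_congr_ae ((ae_sum_range_nonneg_of_expMeasure hmeas hdist k).mono
          fun ω hω => abs_rpow_sub_mul_rpow_rpow hε ?_ hω)
        nlinarith [(Nat.one_le_cast (α := ℝ)).2 hk]
    _ ≤ ε ^ (α * β) * (C * k ^ (α * β) * k ^ (-(β / 2))) := by
        gcongr
        exact integral_abs_rpow_sub_sum_range_rpow_le hmeas hindep hdist hα0 hα1 hβ hk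
          ((le_div_iff₀ hε).2 hr1) ((div_le_iff₀ hε).2 hr2)
    _ = C * (k * ε) ^ (α * β) * k ^ (-(β / 2)) := by rw [mul_rpow hk0.le hε.le]; ring

/-- For i.i.d. `Exp(1)` random variables `(T_k)` with partial sums `S_k`, any `α ∈ (0,1]`
and `β ≥ 0`, there is `C = C(α,β) > 0` such that for all `ε > 0`, `k ≥ 1` and
`r ∈ [(k-1)ε, kε]`, `E|r^α - (ε S_k)^α|^β ≤ C (kε)^{αβ} k^{-β/2}`. -/
theorem stmt_1 {Ω : Type*} [MeasurableSpace Ω] (P : Measure Ω) [IsProbabilityMeasure P]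
    (T : ℕ → Ω → ℝ) (hmeas : ∀ i, Measurable (T i))
    (hindep : iIndepFun T P)
    (hdist : ∀ i, P.map (T i) = expMeasure 1)
    (α β : ℝ) (hα0 : 0 < α) (hα1 : α ≤ 1) (hβ : 0 ≤ β) :
    ∃ C > 0, ∀ (ε : ℝ) (k : ℕ), 0 < ε → 1 ≤ k →
      ∀ r ∈ Set.Icc (((k : ℝ) - 1) * ε) ((k : ℝ) * ε),
        (∫ ω, |r ^ α - (ε * ∑ i ∈ Finset.range k, T i ω) ^ α| ^ β ∂P) ≤
          C * ((k : ℝ) * ε) ^ (α * β) * (k : ℝ) ^ (-(β / 2)) :=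
  stmt_1_general P T hmeas hindep hdist α β hα0 hα1 hβ
end

section
/- For any α, β ∈ [0,1), t > 0, there exists C > 0 such that for all 0 < δ < min(1, t/3), ∫_δ^{t_δ} ( s^{-α} s_δ^{-β} + (t-s)^{-α} (t-s_δ)^{-β} ) ds ≤ C ( δ^{1-α-β} + 1 - 1_{α+β=1} log δ ), where s_δ := kδ for s ∈ [kδ, (k+1)δ) and t_δ := ⌊t/δ⌋ δ. -/
/-!
On `[δ, t - δ]` the grid point satisfies `s / 2 ≤ s_δ ≤ s`, so the integrand is at most
`2^β s^{-(α+β)} + (t - s)^{-(α+β)}`, whose integral is `(2^β + 1) ∫_δ^{t-δ} s^{-(α+β)}`; this is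
`O(1)`, `O(-log δ)` or `O(δ^{1-α-β})` according as `α + β` is below, equal to or above `1`.
On the remaining piece `[t - δ, t_δ]`, of length at most `δ`, both `s` and `s_δ` exceed `t / 3`,
while `t - s_δ ≥ δ` because `s_δ + δ ≤ t_δ`; there the integrand is at most
`(t/3)^{-(α+β)} + δ^{-β} (t - s)^{-α}`, whose integral is `O(δ^{1-α-β})` since `α < 1`.
-/

open intervalIntegral

/-- Grid point: `gridPt δ s = kδ` for `s ∈ [kδ, (k+1)δ)`. -/
noncomputable def gridPt (δ s : ℝ) : ℝ := δ * ⌊s / δ⌋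

open Real MeasureTheory Set

section gridPt

variable {δ s t : ℝ}

lemma gridPt_le (hδ : 0 < δ) : gridPt δ s ≤ s := by
  rw [gridPt, ← le_div_iff₀' hδ]
  exact Int.floor_le _

lemma sub_lt_gridPt (hδ : 0 < δ) : s - δ < gridPt δ s := by
  have h := (div_lt_iff₀ hδ).mp (Int.lt_floor_add_one (s / δ))
  rw [gridPt]
  linarith

lemma le_gridPt (hδ : 0 < δ) (hs : δ ≤ s) : δ ≤ gridPt δ s := by
  have h : (1 : ℤ) ≤ ⌊s / δ⌋ := Int.le_floor.mpr (by simpa using (one_le_div hδ).mpr hs)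
  have h' : (1 : ℝ) ≤ ⌊s / δ⌋ := by exact_mod_cast h
  rw [gridPt]
  nlinarith

lemma half_le_gridPt (hδ : 0 < δ) (hs : δ ≤ s) : s / 2 ≤ gridPt δ s := by
  linarith [le_gridPt hδ hs, sub_lt_gridPt (s := s) hδ]

lemma gridPt_add_le (hδ : 0 < δ) (hst : s < gridPt δ t) : gridPt δ s + δ ≤ gridPt δ t := by
  have h : ⌊s / δ⌋ < ⌊t / δ⌋ :=
    Int.floor_lt.mpr ((div_lt_iff₀ hδ).mpr (by rw [gridPt] at hst; linarith))
  have h' : (⌊s / δ⌋ : ℝ) + 1 ≤ ⌊t / δ⌋ := by exact_mod_cast h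
  rw [gridPt, gridPt]
  nlinarith

end gridPt

noncomputable def singularScale (γ δ : ℝ) : ℝ :=
  δ ^ (1 - γ) + 1 - (if γ = 1 then 1 else 0) * log δ

lemma rpow_add_one_le_singularScale {γ δ : ℝ} (hδ : 0 < δ) (hδ1 : δ < 1) :
    δ ^ (1 - γ) + 1 ≤ singularScale γ δ := by
  have : (if γ = 1 then (1 : ℝ) else 0) * log δ ≤ 0 := by
    split_ifs
    · simpa using (log_neg hδ hδ1).le
    · simp
  rw [singularScale]
  linarith

section powerIntegral

variable {γ δ T : ℝ}

lemma integral_rpow_neg_le_of_lt_one (hγ : γ < 1) (hδ : 0 ≤ δ) :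
    ∫ s in δ..T, s ^ (-γ) ≤ T ^ (1 - γ) / (1 - γ) := by
  rw [integral_rpow (Or.inl (by linarith)), neg_add_eq_sub]
  gcongr
  linarith [rpow_nonneg hδ (1 - γ)]

lemma integral_rpow_neg_le_of_one_lt (hγ : 1 < γ) (hδ : 0 < δ) (hδT : δ ≤ T) :
    ∫ s in δ..T, s ^ (-γ) ≤ δ ^ (1 - γ) / (γ - 1) := by
  have h0 : (0 : ℝ) ∉ uIcc δ T := by
    rw [uIcc_of_le hδT]
    exact fun h ↦ hδ.not_ge h.1
  rw [integral_rpow (Or.inr ⟨by linarith, h0⟩), neg_add_eq_sub, ← neg_div_neg_eq, neg_sub,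
    neg_sub]
  gcongr
  linarith [rpow_nonneg (hδ.trans_le hδT).le (1 - γ)]

lemma exists_integral_rpow_neg_le_singularScale (γ : ℝ) {t : ℝ} (ht : 0 < t) :
    ∃ K ≥ 0, ∀ δ T, 0 < δ → δ < 1 → δ ≤ T → T ≤ t →
      ∫ s in δ..T, s ^ (-γ) ≤ K * singularScale γ δ := by
  rcases lt_trichotomy γ 1 with hγ | rfl | hγ
  · refine ⟨t ^ (1 - γ) / (1 - γ), by positivity, fun δ T hδ hδ1 hδT hTt ↦ ?_⟩
    have hS := rpow_add_one_le_singularScale (γ := γ) hδ hδ1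
    calc ∫ s in δ..T, s ^ (-γ) ≤ T ^ (1 - γ) / (1 - γ) :=
          integral_rpow_neg_le_of_lt_one hγ hδ.le
      _ ≤ t ^ (1 - γ) / (1 - γ) := by
          gcongr
          linarith
      _ ≤ t ^ (1 - γ) / (1 - γ) * singularScale γ δ := by
          refine le_mul_of_one_le_right (by positivity) ?_
          linarith [rpow_nonneg hδ.le (1 - γ)]
  · refine ⟨max 0 (log t) + 1, by positivity, fun δ T hδ hδ1 hδT hTt ↦ ?_⟩
    have hT : 0 < T := hδ.trans_le hδT
    have hlogT : log T ≤ max 0 (log t) := (log_le_log hT hTt).trans (le_max_right _ _)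
    have hS : singularScale 1 δ = 2 - log δ := by
      rw [singularScale, sub_self, rpow_zero, if_pos rfl]
      ring
    have hlogδ := log_neg hδ hδ1
    rw [hS]
    simp_rw [rpow_neg_one]
    rw [integral_inv_of_pos hδ hT, log_div hT.ne' hδ.ne']
    nlinarith [le_max_left 0 (log t)]
  · refine ⟨1 / (γ - 1), (one_div_pos.mpr (sub_pos.mpr hγ)).le, fun δ T hδ hδ1 hδT _ ↦ ?_⟩
    have hS := rpow_add_one_le_singularScale (γ := γ) hδ hδ1
    calc ∫ s in δ..T, s ^ (-γ) ≤ δ ^ (1 - γ) / (γ - 1) :=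
          integral_rpow_neg_le_of_one_lt hγ hδ hδT
      _ ≤ 1 / (γ - 1) * singularScale γ δ := by
          rw [one_div_mul_eq_div]
          gcongr
          linarith

end powerIntegral

lemma rpow_neg_mul_rpow_neg_le {α β a b x y : ℝ} (hα : 0 ≤ α) (hβ : 0 ≤ β) (ha : 0 < a)
    (hb : 0 < b) (hax : a ≤ x) (hby : b ≤ y) : x ^ (-α) * y ^ (-β) ≤ a ^ (-α) * b ^ (-β) :=
  mul_le_mul (rpow_le_rpow_of_nonpos ha hax (by linarith))
    (rpow_le_rpow_of_nonpos hb hby (by linarith)) (rpow_nonneg (hb.trans_le hby).le _)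
    (rpow_nonneg ha.le _)

noncomputable def gridIntegrand (α β t δ s : ℝ) : ℝ :=
  s ^ (-α) * (gridPt δ s) ^ (-β) + (t - s) ^ (-α) * (t - gridPt δ s) ^ (-β)

section gridIntegrand

variable {α β t δ s : ℝ}

lemma gridIntegrand_le_of_mem_bulk (hα : 0 ≤ α) (hβ : 0 ≤ β) (hδ : 0 < δ)
    (hs : s ∈ Icc δ (t - δ)) :
    gridIntegrand α β t δ s ≤ 2 ^ β * s ^ (-(α + β)) + (t - s) ^ (-(α + β)) := by
  obtain ⟨hδs, hst⟩ := hs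
  have hs0 : 0 < s := hδ.trans_le hδs
  have hts : 0 < t - s := by linarith
  have hfirst := rpow_neg_mul_rpow_neg_le hα hβ hs0 (half_pos hs0) le_rfl (half_le_gridPt hδ hδs)
  have hsecond := rpow_neg_mul_rpow_neg_le hα hβ hts hts le_rfl
    (sub_le_sub_left (gridPt_le hδ) t)
  have hhalf : (s / 2) ^ (-β) = 2 ^ β * s ^ (-β) := by
    rw [div_rpow hs0.le zero_le_two, rpow_neg zero_le_two, div_inv_eq_mul, mul_comm]
  rw [hhalf, mul_left_comm, ← rpow_add hs0, ← neg_add] at hfirst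
  rw [← rpow_add hts, ← neg_add] at hsecond
  exact add_le_add hfirst hsecond

lemma gridIntegrand_le_of_mem_end (hα : 0 ≤ α) (hβ : 0 ≤ β) (hδ : 0 < δ) (hδt : δ < t / 3)
    (hs : s ∈ Ioo (t - δ) (gridPt δ t)) :
    gridIntegrand α β t δ s ≤ (t / 3) ^ (-(α + β)) + (t - s) ^ (-α) * δ ^ (-β) := by
  obtain ⟨hts, hsT⟩ := hs
  have ht3 : 0 < t / 3 := hδ.trans hδt
  have hfirst := rpow_neg_mul_rpow_neg_le (x := s) (y := gridPt δ s) hα hβ ht3 ht3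
    (by linarith) (by linarith [sub_lt_gridPt (s := s) hδ])
  have hsecond := rpow_neg_mul_rpow_neg_le (x := t - s) (y := t - gridPt δ s) hα hβ
    (by linarith [gridPt_le (s := t) hδ]) hδ le_rfl
    (by linarith [gridPt_add_le hδ hsT, gridPt_le (s := t) hδ])
  rw [← rpow_add ht3, ← neg_add] at hfirst
  exact add_le_add hfirst hsecond

end gridIntegrand

lemma integral_sub_rpow_neg_le {α t a b : ℝ} (hα1 : α < 1) (hbt : b ≤ t) :
    ∫ s in a..b, (t - s) ^ (-α) ≤ (t - a) ^ (1 - α) / (1 - α) := by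
  rw [integral_comp_sub_left (fun u ↦ u ^ (-α))]
  exact integral_rpow_neg_le_of_lt_one hα1 (sub_nonneg.mpr hbt)

section gridIntegral

variable {α β t δ : ℝ}

lemma integral_gridIntegrand_bulk_le (hα : 0 ≤ α) (hβ : 0 ≤ β) (hδ : 0 < δ) (hδt : δ ≤ t - δ)
    (hf : IntervalIntegrable (gridIntegrand α β t δ) volume δ (t - δ)) :
    ∫ s in δ..(t - δ), gridIntegrand α β t δ s ≤
      (2 ^ β + 1) * ∫ s in δ..(t - δ), s ^ (-(α + β)) := by
  have hpow : IntervalIntegrable (fun s ↦ s ^ (-(α + β))) volume δ (t - δ) := by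
    refine ContinuousOn.intervalIntegrable (continuousOn_id.rpow_const fun s hs ↦ Or.inl ?_)
    rw [uIcc_of_le hδt] at hs
    exact (hδ.trans_le hs.1).ne'
  have hreflect : IntervalIntegrable (fun s ↦ (t - s) ^ (-(α + β))) volume δ (t - δ) := by
    simpa [sub_sub_cancel] using (hpow.comp_sub_left t).symm
  calc ∫ s in δ..(t - δ), gridIntegrand α β t δ s
      ≤ ∫ s in δ..(t - δ), (2 ^ β * s ^ (-(α + β)) + (t - s) ^ (-(α + β))) :=
        integral_mono_on hδt hf ((hpow.const_mul _).add hreflect)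
          fun s hs ↦ gridIntegrand_le_of_mem_bulk hα hβ hδ hs
    _ = (2 ^ β + 1) * ∫ s in δ..(t - δ), s ^ (-(α + β)) := by
        rw [integral_add (hpow.const_mul _) hreflect, intervalIntegral.integral_const_mul,
          integral_comp_sub_left (fun u ↦ u ^ (-(α + β))), sub_sub_cancel]
        ring

lemma integral_gridIntegrand_end_le (hα : 0 ≤ α) (hα1 : α < 1) (hβ : 0 ≤ β) (hδ : 0 < δ)
    (hδt : δ < t / 3)
    (hf : IntervalIntegrable (gridIntegrand α β t δ) volume (t - δ) (gridPt δ t)) :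
    ∫ s in (t - δ)..gridPt δ t, gridIntegrand α β t δ s ≤
      (t / 3) ^ (-(α + β)) * δ + δ ^ (1 - (α + β)) / (1 - α) := by
  have hgrid : t - δ ≤ gridPt δ t := (sub_lt_gridPt hδ).le
  have hgrid_le : gridPt δ t ≤ t := gridPt_le hδ
  have hpow : IntervalIntegrable (fun s ↦ (t - s) ^ (-α)) volume (t - δ) (gridPt δ t) := by
    have := (intervalIntegrable_rpow' (a := δ) (b := t - gridPt δ t) (r := -α)
      (by linarith)).comp_sub_left t
    rwa [sub_sub_cancel] at this
  calc ∫ s in (t - δ)..gridPt δ t, gridIntegrand α β t δ s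
      ≤ ∫ s in (t - δ)..gridPt δ t, ((t / 3) ^ (-(α + β)) + (t - s) ^ (-α) * δ ^ (-β)) :=
        integral_mono_on_of_le_Ioo hgrid hf (intervalIntegrable_const.add (hpow.mul_const _))
          fun s hs ↦ gridIntegrand_le_of_mem_end hα hβ hδ hδt hs
    _ = (gridPt δ t - (t - δ)) * (t / 3) ^ (-(α + β)) +
          (∫ s in (t - δ)..gridPt δ t, (t - s) ^ (-α)) * δ ^ (-β) := by
        rw [integral_add intervalIntegrable_const (hpow.mul_const _),
          intervalIntegral.integral_const, intervalIntegral.integral_mul_const, smul_eq_mul]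
    _ ≤ δ * (t / 3) ^ (-(α + β)) + (t - (t - δ)) ^ (1 - α) / (1 - α) * δ ^ (-β) := by
        have ht3 : 0 ≤ (t / 3) ^ (-(α + β)) := rpow_nonneg (by linarith) _
        have hδβ : 0 ≤ δ ^ (-β) := rpow_nonneg hδ.le _
        gcongr
        · linarith
        · exact integral_sub_rpow_neg_le hα1 hgrid_le
    _ = (t / 3) ^ (-(α + β)) * δ + δ ^ (1 - (α + β)) / (1 - α) := by
        rw [sub_sub_cancel, show 1 - (α + β) = 1 - α + -β by ring, rpow_add hδ]
        ring

lemma integral_gridIntegrand_le (hα : 0 ≤ α) (hα1 : α < 1) (hβ : 0 ≤ β) (hδ : 0 < δ)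
    (hδt : δ < t / 3) :
    ∫ s in δ..gridPt δ t, gridIntegrand α β t δ s ≤
      (2 ^ β + 1) * (∫ s in δ..(t - δ), s ^ (-(α + β))) +
        (t / 3) ^ (-(α + β)) * δ + δ ^ (1 - (α + β)) / (1 - α) := by
  have hmid : δ ≤ t - δ := by linarith
  have hgrid : t - δ ≤ gridPt δ t := (sub_lt_gridPt hδ).le
  by_cases hf : IntervalIntegrable (gridIntegrand α β t δ) volume δ (gridPt δ t)
  · have hmem : t - δ ∈ uIcc δ (gridPt δ t) := by
      rw [uIcc_of_le (hmid.trans hgrid)]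
      exact ⟨hmid, hgrid⟩
    have hbulk := hf.mono_set (uIcc_subset_uIcc left_mem_uIcc hmem)
    have hend := hf.mono_set (uIcc_subset_uIcc hmem right_mem_uIcc)
    rw [← integral_add_adjacent_intervals hbulk hend]
    linarith [integral_gridIntegrand_bulk_le hα hβ hδ hmid hbulk,
      integral_gridIntegrand_end_le hα hα1 hβ hδ hδt hend]
  · rw [integral_undef hf]
    have hpow : 0 ≤ ∫ s in δ..(t - δ), s ^ (-(α + β)) :=
      integral_nonneg hmid fun s hs ↦ rpow_nonneg (hδ.le.trans hs.1) _
    have ht3 : 0 ≤ (t / 3) ^ (-(α + β)) := rpow_nonneg (by linarith) _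
    have hα' : 0 < 1 - α := by linarith
    positivity

end gridIntegral

theorem stmt_10_general (α β t : ℝ) (hα : 0 ≤ α) (hα1 : α < 1) (hβ : 0 ≤ β)
    (ht : 0 < t) :
    ∃ C > 0, ∀ δ : ℝ, 0 < δ → δ < min 1 (t / 3) →
      (∫ s in δ..gridPt δ t,
          s ^ (-α) * (gridPt δ s) ^ (-β) + (t - s) ^ (-α) * (t - gridPt δ s) ^ (-β)) ≤
        C * (δ ^ (1 - α - β) + 1 - (if α + β = 1 then 1 else 0) * Real.log δ) := by
  obtain ⟨K, hK, hKbound⟩ := exists_integral_rpow_neg_le_singularScale (α + β) ht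
  have hα' : 0 < 1 - α := by linarith
  have ht3 : 0 ≤ (t / 3) ^ (-(α + β)) := rpow_nonneg (by linarith) _
  refine ⟨(2 ^ β + 1) * K + (t / 3) ^ (-(α + β)) + 1 / (1 - α), by positivity,
    fun δ hδ hδ' ↦ ?_⟩
  obtain ⟨hδ1, hδt⟩ := lt_min_iff.mp hδ'
  have hS := rpow_add_one_le_singularScale (γ := α + β) hδ hδ1
  have hpow := hKbound δ (t - δ) hδ hδ1 (by linarith) (by linarith)
  rw [sub_sub, ← singularScale]
  calc ∫ s in δ..gridPt δ t, gridIntegrand α β t δ s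
      ≤ (2 ^ β + 1) * (∫ s in δ..(t - δ), s ^ (-(α + β))) +
          (t / 3) ^ (-(α + β)) * δ + δ ^ (1 - (α + β)) / (1 - α) :=
        integral_gridIntegrand_le hα hα1 hβ hδ hδt
    _ ≤ (2 ^ β + 1) * (K * singularScale (α + β) δ) + (t / 3) ^ (-(α + β)) *
          singularScale (α + β) δ + singularScale (α + β) δ / (1 - α) := by
        gcongr <;> linarith [rpow_nonneg hδ.le (1 - (α + β))]
    _ = _ := by ring

/-- For `α, β ∈ [0,1)` and `t > 0`, there is `C > 0` such that for all `0 < δ < min(1, t/3)`,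
`∫_δ^{t_δ} (s^{-α} s_δ^{-β} + (t-s)^{-α} (t-s_δ)^{-β}) ds
  ≤ C (δ^{1-α-β} + 1 - 1_{α+β=1} log δ)`. -/
theorem stmt_10 (α β t : ℝ) (hα : 0 ≤ α) (hα1 : α < 1) (hβ : 0 ≤ β) (hβ1 : β < 1)
    (ht : 0 < t) :
    ∃ C > 0, ∀ δ : ℝ, 0 < δ → δ < min 1 (t / 3) →
      (∫ s in δ..gridPt δ t,
          s ^ (-α) * (gridPt δ s) ^ (-β) + (t - s) ^ (-α) * (t - gridPt δ s) ^ (-β)) ≤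
        C * (δ ^ (1 - α - β) + 1 - (if α + β = 1 then 1 else 0) * Real.log δ) :=
  stmt_10_general α β t hα hα1 hβ ht
end

section
/- Let H ∈ (1/2,1) and 0 ≤ s' < s < t, and set δ := s - s'. Then there is a constant C = C(H) such that ∫_s^t (r-s)^{H-3/2}(r-s')^{H-3/2} dr ≤ C (s-s')^{H-3/2} δ^{H-1/2} = C(H) (s-s')^{2H-2}. -/
open intervalIntegral

/-- For `H ∈ (1/2,1)` and `0 ≤ s' < s < t`, the integral
`∫_s^t (r-s)^{H-3/2} (r-s')^{H-3/2} dr` is bounded by `C(H) (s-s')^{2H-2}`. -/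
theorem stmt_15 (H : ℝ) (hH : 1 / 2 < H) (hH1 : H < 1) :
    ∃ C > 0, ∀ s' s t : ℝ, 0 ≤ s' → s' < s → s < t →
      (∫ r in s..t, (r - s) ^ (H - 3 / 2) * (r - s') ^ (H - 3 / 2)) ≤
        C * (s - s') ^ (2 * H - 2) := by
  have h1 : (0:ℝ) < H - 1/2 := by linarith
  have h2 : (0:ℝ) < 2 - 2*H := by linarith
  refine ⟨1/(H-1/2) + 1/(2-2*H), by positivity, ?_⟩
  intro s' s t hs' hss hst
  set δ := s - s' with hδdef
  have hδ0 : 0 < δ := by simp only [hδdef]; linarith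
  have he1 : (-1:ℝ) < H - 3/2 := by linarith
  have he2 : H - 3/2 ≤ 0 := by linarith
  -- integrability of translated rpow
  have hInt1 : ∀ a b : ℝ, IntervalIntegrable (fun r => (r - s) ^ (H - 3/2)) MeasureTheory.volume a b := by
    intro a b
    have := (intervalIntegrable_rpow' (r := H - 3/2) he1 (a := a - s) (b := b - s)).comp_sub_right s
    simpa using this
  -- integrability of f on [s, b]
  have hIntf : ∀ b, s ≤ b → IntervalIntegrable
      (fun r => (r - s) ^ (H - 3/2) * (r - s') ^ (H - 3/2)) MeasureTheory.volume s b := by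
    intro b hb
    refine (hInt1 s b).mul_continuousOn ?_
    refine ContinuousOn.rpow_const ((continuous_id.sub continuous_const).continuousOn) ?_
    intro x hx
    rw [Set.uIcc_of_le hb] at hx
    exact Or.inl (by have := hx.1; intro h; simp only [sub_eq_zero] at h; linarith)
  -- value of ∫_s^b (r-s)^(H-3/2)
  have hI1 : ∀ b, s ≤ b → (∫ r in s..b, (r - s) ^ (H - 3/2)) = (b - s) ^ (H - 1/2) / (H - 1/2) := by
    intro b hb
    have : (∫ r in s..b, (r - s) ^ (H - 3/2))
        = ∫ x in (s - s)..(b - s), x ^ (H - 3/2) := by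
      rw [intervalIntegral.integral_comp_sub_right (fun x => x ^ (H - 3/2)) s]
    rw [this, integral_rpow (Or.inl he1), sub_self,
      Real.zero_rpow (by intro h; rw [show H - 3/2 + 1 = H - 1/2 by ring] at h; linarith)]
    rw [show H - 3/2 + 1 = H - 1/2 by ring, sub_zero]
  -- pointwise bound on [s, u] for u ≤ s + δ
  have hbd1 : ∀ u, u ≤ s + δ → ∀ x ∈ Set.Icc s u,
      (x - s) ^ (H - 3/2) * (x - s') ^ (H - 3/2) ≤ δ ^ (H - 3/2) * (x - s) ^ (H - 3/2) := by
    intro u hu x hx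
    rw [mul_comm (δ ^ (H - 3/2))]
    refine mul_le_mul_of_nonneg_left ?_ (Real.rpow_nonneg (by linarith [hx.1]) _)
    exact Real.rpow_le_rpow_of_nonpos hδ0 (by simp only [hδdef]; linarith [hx.1]) he2
  have hcase1 : ∀ u, s < u → u ≤ s + δ →
      (∫ r in s..u, (r - s) ^ (H - 3/2) * (r - s') ^ (H - 3/2)) ≤ δ ^ (2*H-2) / (H - 1/2) := by
    intro u hsu huδ
    have hmono := intervalIntegral.integral_mono_on (le_of_lt hsu) (hIntf u hsu.le)
      ((hInt1 s u).const_mul (δ ^ (H - 3/2))) (hbd1 u huδ)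
    refine hmono.trans ?_
    rw [intervalIntegral.integral_const_mul, hI1 u hsu.le]
    have husδ : u - s ≤ δ := by linarith
    have h3 : (u - s) ^ (H - 1/2) ≤ δ ^ (H - 1/2) :=
      Real.rpow_le_rpow (by linarith) husδ (by linarith)
    calc δ ^ (H - 3/2) * ((u - s) ^ (H - 1/2) / (H - 1/2))
        ≤ δ ^ (H - 3/2) * (δ ^ (H - 1/2) / (H - 1/2)) := by
          refine mul_le_mul_of_nonneg_left ?_ (Real.rpow_nonneg hδ0.le _)
          exact div_le_div_of_nonneg_right h3 h1.le
      _ = δ ^ (2*H-2) / (H - 1/2) := by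
          rw [mul_div_assoc', ← Real.rpow_add hδ0,
            show H - 3/2 + (H - 1/2) = 2*H-2 by ring]
  by_cases hc : t ≤ s + δ
  · refine (hcase1 t hst hc).trans ?_
    rw [div_eq_mul_inv, mul_comm]
    have : (0:ℝ) ≤ δ ^ (2*H-2) := Real.rpow_nonneg hδ0.le _
    rw [show (1/(H-1/2) + 1/(2-2*H)) * (s - s') ^ (2*H-2)
        = (H-1/2)⁻¹ * δ ^ (2*H-2) + (2-2*H)⁻¹ * δ ^ (2*H-2) by rw [← hδdef]; ring]
    nlinarith [mul_nonneg (le_of_lt (inv_pos.mpr h2)) this]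
  · push_neg at hc
    -- integrability on [s+δ, t]
    have hcont2 : ContinuousOn
        (fun r => (r - s) ^ (H - 3/2) * (r - s') ^ (H - 3/2)) (Set.uIcc (s+δ) t) := by
      rw [Set.uIcc_of_le hc.le]
      refine ContinuousOn.mul ?_ ?_ <;>
      · refine ContinuousOn.rpow_const ((continuous_id.sub continuous_const).continuousOn) ?_
        intro x hx
        refine Or.inl ?_
        have := hx.1
        intro h; simp only [sub_eq_zero] at h
        all_goals nlinarith [hδ0]
    have hIntf2 : IntervalIntegrable
        (fun r => (r - s) ^ (H - 3/2) * (r - s') ^ (H - 3/2)) MeasureTheory.volume (s+δ) t :=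
      hcont2.intervalIntegrable
    have hIntg2 : IntervalIntegrable (fun r => (r - s) ^ (2*H-3)) MeasureTheory.volume (s+δ) t := by
      refine ContinuousOn.intervalIntegrable ?_
      refine ContinuousOn.rpow_const ((continuous_id.sub continuous_const).continuousOn) ?_
      intro x hx
      rw [Set.uIcc_of_le hc.le] at hx
      exact Or.inl (by have := hx.1; intro h; simp only [sub_eq_zero] at h; nlinarith [hδ0])
    have hbd2 : ∀ x ∈ Set.Icc (s+δ) t,
        (x - s) ^ (H - 3/2) * (x - s') ^ (H - 3/2) ≤ (x - s) ^ (2*H-3) := by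
      intro x hx
      have hxs : 0 < x - s := by nlinarith [hx.1, hδ0]
      have : (x - s') ^ (H - 3/2) ≤ (x - s) ^ (H - 3/2) :=
        Real.rpow_le_rpow_of_nonpos hxs (by linarith [hss]) he2
      calc (x - s) ^ (H - 3/2) * (x - s') ^ (H - 3/2)
          ≤ (x - s) ^ (H - 3/2) * (x - s) ^ (H - 3/2) :=
            mul_le_mul_of_nonneg_left this (Real.rpow_nonneg hxs.le _)
        _ = (x - s) ^ (2*H-3) := by rw [← Real.rpow_add hxs]; norm_num; ring_nf
    have hI2 : (∫ r in (s+δ)..t, (r - s) ^ (2*H-3))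
        = ((t - s) ^ (2*H-2) - δ ^ (2*H-2)) / (2*H-2) := by
      have : (∫ r in (s+δ)..t, (r - s) ^ (2*H-3))
          = ∫ x in (s + δ - s)..(t - s), x ^ (2*H-3) := by
        rw [intervalIntegral.integral_comp_sub_right (fun x => x ^ (2*H-3)) s]
      rw [this, integral_rpow]
      · rw [show s + δ - s = δ by ring, show 2*H-3+1 = 2*H-2 by ring]
      · refine Or.inr ⟨by intro h; nlinarith, ?_⟩
        rw [show s + δ - s = δ by ring, Set.uIcc_of_le (by linarith : δ ≤ t - s)]
        intro h
        exact absurd h.1 (by linarith)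
    have hpiece2 : (∫ r in (s+δ)..t, (r - s) ^ (H - 3/2) * (r - s') ^ (H - 3/2))
        ≤ δ ^ (2*H-2) / (2-2*H) := by
      refine (intervalIntegral.integral_mono_on hc.le hIntf2 hIntg2 hbd2).trans ?_
      have ht0 : (0:ℝ) ≤ (t - s) ^ (2*H-2) := Real.rpow_nonneg (by linarith) _
      rw [hI2, show ((t - s) ^ (2*H-2) - δ ^ (2*H-2)) / (2*H-2)
          = (δ ^ (2*H-2) - (t - s) ^ (2*H-2)) / (2-2*H) by
        rw [div_eq_div_iff (by linarith) (by linarith)]; ring]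
      gcongr
      linarith
    have hsplit := intervalIntegral.integral_add_adjacent_intervals
      (hIntf (s+δ) (by linarith)) hIntf2
    rw [← hsplit]
    have hpiece1 := hcase1 (s+δ) (by linarith) le_rfl
    have : (0:ℝ) ≤ δ ^ (2*H-2) := Real.rpow_nonneg hδ0.le _
    rw [show (1/(H-1/2) + 1/(2-2*H)) * (s - s') ^ (2*H-2)
        = δ ^ (2*H-2)/(H-1/2) + δ ^ (2*H-2)/(2-2*H) by rw [← hδdef]; ring]
    linarith
end

section
/- Let N be a rate-1 Poisson process, ε ∈ (0,1), N_t^ε = ε N_{t/ε}, and W an independent Brownian motion. For 0 ≤ b < a, E|W_a - W_b - W_{N_a^ε} + W_{N_b^ε}|² ≤ C ε^{1/2} for a constant C independent of a, b, ε (with a, b in a fixed bounded interval [0,T], T ≥ 1). -/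
/-!
Split the increment as `A_a - A_b` with `A_t = W_t - W_{N^ε_t}`, so that
`E|A_a - A_b|² ≤ 2 E A_a² + 2 E A_b²`. Conditionally on the independent Poisson process,
`A_t` is centred Gaussian with variance `|t - N^ε_t|`, hence by Cauchy–Schwarz and
`Var N_r = r`,
`E A_t² = E|t - N^ε_t| = ε E|N_{t/ε} - t/ε| ≤ ε √(t/ε) = √(ε t) ≤ √T ε^{1/2}`.
-/

open MeasureTheory ProbabilityTheory Real
open scoped NNReal ENNReal Nat

lemma hasSum_poisson_mul_descFactorial (r : ℝ≥0) (k : ℕ) :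
    HasSum (fun n ↦ exp (-r) * r ^ n / n ! * n.descFactorial k) ((r : ℝ) ^ k) := by
  rw [← hasSum_nat_add_iff' k]
  have hlow : ∑ i ∈ Finset.range k, exp (-r) * r ^ i / i ! * (i.descFactorial k : ℝ) = 0 :=
    Finset.sum_eq_zero fun i hi ↦ by
      simp [Nat.descFactorial_eq_zero_iff_lt.mpr (Finset.mem_range.mp hi)]
  rw [hlow, sub_zero]
  have h := (hasSum_one_poissonMeasure r).mul_left ((r : ℝ) ^ k)
  rw [mul_one] at h
  refine h.congr_fun fun n ↦ ?_
  have hfac : ((n + k) ! : ℝ) = n ! * (n + k).descFactorial k := by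
    exact_mod_cast (Nat.add_sub_cancel n k ▸
      Nat.factorial_mul_descFactorial (Nat.le_add_left k n)).symm
  have : ((n + k).descFactorial k : ℝ) ≠ 0 := by
    exact_mod_cast Nat.descFactorial_eq_zero_iff_lt.not.mpr (by omega)
  rw [hfac, pow_add]
  field_simp

lemma hasSum_poisson_mul_sq_sub (r : ℝ≥0) :
    HasSum (fun n ↦ exp (-r) * r ^ n / n ! * ((n : ℝ) - r) ^ 2) r := by
  have h0 := hasSum_poisson_mul_descFactorial r 0
  have h1 := hasSum_poisson_mul_descFactorial r 1
  have h2 := hasSum_poisson_mul_descFactorial r 2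
  -- `(n - r)² = n (n - 1) + (1 - 2 r) n + r²`
  convert (h2.add ((h1.mul_left (1 - 2 * (r : ℝ))).add (h0.mul_left ((r : ℝ) ^ 2)))) using 1
  · ext n
    simp only [Nat.descFactorial_zero, Nat.descFactorial_one, Nat.cast_one]
    rw [Nat.descFactorial_succ, Nat.descFactorial_one]
    rcases n with _ | n <;> push_cast <;> ring
  · ring

lemma lintegral_sq_sub_poissonMeasure (r : ℝ≥0) :
    ∫⁻ n, ENNReal.ofReal (((n : ℝ) - r) ^ 2) ∂poissonMeasure r = r := by
  rw [lintegral_countable']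
  simp_rw [poissonMeasure_singleton, ← ENNReal.ofReal_mul (sq_nonneg _), mul_comm (_ ^ 2)]
  rw [← ENNReal.ofReal_tsum_of_nonneg (fun n ↦ by positivity)
    (hasSum_poisson_mul_sq_sub r).summable, (hasSum_poisson_mul_sq_sub r).tsum_eq,
    ENNReal.ofReal_coe_nnreal]

lemma lintegral_abs_sub_poissonMeasure_le (r : ℝ≥0) :
    ∫⁻ n, ENNReal.ofReal |(n : ℝ) - r| ∂poissonMeasure r ≤ ENNReal.ofReal √r := by
  have h := eLpNorm_le_eLpNorm_of_exponent_le (one_le_two (α := ℝ≥0∞))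
    (μ := poissonMeasure r) (f := fun n : ℕ ↦ (n : ℝ) - r) .of_discrete
  rw [eLpNorm_one_eq_lintegral_enorm, eLpNorm_eq_lintegral_rpow_enorm_toReal two_ne_zero
    ENNReal.ofNat_ne_top] at h
  simp_rw [Real.enorm_eq_ofReal_abs] at h
  refine h.trans_eq ?_
  rw [ENNReal.toReal_ofNat]
  simp_rw [ENNReal.rpow_two, ← ENNReal.ofReal_pow (abs_nonneg _), sq_abs,
    lintegral_sq_sub_poissonMeasure]
  rw [Real.sqrt_eq_rpow, ← ENNReal.ofReal_rpow_of_nonneg r.coe_nonneg (by norm_num),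
    ENNReal.ofReal_coe_nnreal]

lemma lintegral_sq_gaussianReal (v : ℝ≥0) :
    ∫⁻ x, ENNReal.ofReal (x ^ 2) ∂gaussianReal 0 v = v := by
  have hint : Integrable (fun x : ℝ ↦ x ^ 2) (gaussianReal 0 v) :=
    (memLp_id_gaussianReal 2).integrable_sq
  rw [← ofReal_integral_eq_lintegral_ofReal hint (ae_of_all _ fun x ↦ sq_nonneg x),
    ← variance_of_integral_eq_zero aemeasurable_id' integral_id_gaussianReal,
    variance_fun_id_gaussianReal, ENNReal.ofReal_coe_nnreal]

theorem lintegral_comp_prodMk_of_indepFun {Ω β γ : Type*} [MeasurableSpace Ω]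
    [MeasurableSpace β] [MeasurableSpace γ] {μ : Measure Ω} [IsFiniteMeasure μ]
    {X : Ω → β} {Y : Ω → γ} (hXY : IndepFun X Y μ) (hX : Measurable X) (hY : Measurable Y)
    {g : β × γ → ℝ≥0∞} (hg : Measurable g) :
    ∫⁻ ω, g (X ω, Y ω) ∂μ = ∫⁻ y, ∫⁻ x, g (x, y) ∂μ.map X ∂μ.map Y := by
  rw [← lintegral_map hg (hX.prodMk hY),
    (indepFun_iff_map_prod_eq_prod_map_map hX.aemeasurable hY.aemeasurable).mp hXY,
    lintegral_prod_symm g hg.aemeasurable]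

section RandomTime

variable {Ω : Type*} [MeasurableSpace Ω] {P : Measure Ω} {W : ℝ → Ω → ℝ} {Y : Ω → ℕ}

lemma measurable_apply_nat_time (hW : ∀ s, Measurable (W s)) (hY : Measurable Y) (f : ℕ → ℝ) :
    Measurable fun ω ↦ W (f (Y ω)) ω :=
  (measurable_from_prod_countable_left (f := fun q : Ω × ℕ ↦ W (f q.2) q.1)
    fun n ↦ hW (f n)).comp (measurable_id.prodMk hY)

theorem lintegral_sq_sub_apply_nat_time [IsFiniteMeasure P] (hW : ∀ s, Measurable (W s))
    (hY : Measurable Y)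
    (hGauss : ∀ s t : ℝ, 0 ≤ s → 0 ≤ t →
      P.map (fun ω ↦ W s ω - W t ω) = gaussianReal 0 (|s - t|).toNNReal)
    (hWY : IndepFun (fun ω s ↦ W s ω) Y P) {f : ℕ → ℝ} (hf : ∀ n, 0 ≤ f n) {t : ℝ}
    (ht : 0 ≤ t) :
    ∫⁻ ω, ENNReal.ofReal ((W t ω - W (f (Y ω)) ω) ^ 2) ∂P =
      ∫⁻ n, ENNReal.ofReal |t - f n| ∂P.map Y := by
  have hpath : Measurable fun ω s ↦ W s ω := measurable_pi_lambda _ hW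
  have hincr : ∀ n, Measurable fun w : ℝ → ℝ ↦ ENNReal.ofReal ((w t - w (f n)) ^ 2) := fun n ↦
    (((measurable_pi_apply t).sub (measurable_pi_apply (f n))).pow_const 2).ennreal_ofReal
  rw [lintegral_comp_prodMk_of_indepFun (g := fun p ↦ ENNReal.ofReal ((p.1 t - p.1 (f p.2)) ^ 2))
    hWY hpath hY (measurable_from_prod_countable_left hincr)]
  refine lintegral_congr fun n ↦ ?_
  rw [lintegral_map (hincr n) hpath,
    ← lintegral_map (f := fun x ↦ ENNReal.ofReal (x ^ 2)) (g := fun ω ↦ W t ω - W (f n) ω)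
      (by fun_prop) ((hW t).sub (hW (f n))),
    hGauss t (f n) ht (hf n), lintegral_sq_gaussianReal]
  rfl

end RandomTime

lemma lintegral_abs_sub_mul_poissonMeasure_le {t ε : ℝ} (ht : 0 ≤ t) (hε : 0 < ε) :
    ∫⁻ n, ENNReal.ofReal |t - ε * n| ∂poissonMeasure (t / ε).toNNReal ≤
      ENNReal.ofReal √(ε * t) := by
  have hr : ((t / ε).toNNReal : ℝ) = t / ε := Real.coe_toNNReal _ (div_nonneg ht hε.le)
  have hscale : ∀ n : ℕ, |t - ε * n| = ε * |(n : ℝ) - (t / ε).toNNReal| := fun n ↦ by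
    rw [hr, ← abs_of_pos hε, ← abs_mul, abs_sub_comm, abs_of_pos hε]
    congr 1
    field_simp
  calc ∫⁻ n, ENNReal.ofReal |t - ε * n| ∂poissonMeasure (t / ε).toNNReal
      = ENNReal.ofReal ε *
          ∫⁻ n, ENNReal.ofReal |(n : ℝ) - (t / ε).toNNReal| ∂poissonMeasure (t / ε).toNNReal := by
        simp_rw [hscale, ENNReal.ofReal_mul hε.le]
        exact lintegral_const_mul _ .of_discrete
    _ ≤ ENNReal.ofReal ε * ENNReal.ofReal √((t / ε).toNNReal) := by
        gcongr
        exact lintegral_abs_sub_poissonMeasure_le _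
    _ = ENNReal.ofReal √(ε * t) := by
        rw [← ENNReal.ofReal_mul hε.le, hr]
        congr 1
        calc ε * √(t / ε) = √(ε ^ 2 * (t / ε)) := by
              rw [Real.sqrt_mul (sq_nonneg ε), Real.sqrt_sq hε.le]
          _ = √(ε * t) := by congr 1; field_simp

theorem lintegral_sq_sub_poisson_time_le {Ω : Type*} [MeasurableSpace Ω] {P : Measure Ω}
    [IsFiniteMeasure P] {W : ℝ → Ω → ℝ} {N : ℝ → Ω → ℕ}
    (hW : ∀ s, Measurable (W s)) (hN : ∀ s, Measurable (N s))
    (hGauss : ∀ s t : ℝ, 0 ≤ s → 0 ≤ t →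
      P.map (fun ω ↦ W s ω - W t ω) = gaussianReal 0 (|s - t|).toNNReal)
    (hPoisson : ∀ s : ℝ, 0 ≤ s → P.map (N s) = poissonMeasure s.toNNReal)
    (hWN : IndepFun (fun ω s ↦ W s ω) (fun ω s ↦ N s ω) P) {t ε : ℝ} (ht : 0 ≤ t)
    (hε : 0 < ε) :
    ∫⁻ ω, ENNReal.ofReal ((W t ω - W (ε * N (t / ε) ω) ω) ^ 2) ∂P ≤ ENNReal.ofReal √(ε * t) := by
  have hWNt : IndepFun (fun ω s ↦ W s ω) (N (t / ε)) P :=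
    hWN.comp measurable_id (measurable_pi_apply (t / ε))
  rw [lintegral_sq_sub_apply_nat_time (f := fun n ↦ ε * n) hW (hN _) hGauss hWNt
    (fun n ↦ by positivity) ht, hPoisson _ (div_nonneg ht hε.le)]
  exact lintegral_abs_sub_mul_poissonMeasure_le ht hε

theorem integral_sq_sub_le_of_lintegral_sq_le {Ω : Type*} [MeasurableSpace Ω] {P : Measure Ω}
    {f g : Ω → ℝ} (hf : AEMeasurable f P) {c d : ℝ} (hc : 0 ≤ c) (hd : 0 ≤ d)
    (hfc : ∫⁻ ω, ENNReal.ofReal (f ω ^ 2) ∂P ≤ ENNReal.ofReal c)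
    (hgd : ∫⁻ ω, ENNReal.ofReal (g ω ^ 2) ∂P ≤ ENNReal.ofReal d) :
    ∫ ω, (f ω - g ω) ^ 2 ∂P ≤ 2 * (c + d) := by
  have hpt : ∀ ω, ENNReal.ofReal ((f ω - g ω) ^ 2) ≤
      2 * ENNReal.ofReal (f ω ^ 2) + 2 * ENNReal.ofReal (g ω ^ 2) := fun ω ↦ by
    rw [← ENNReal.ofReal_ofNat 2, ← ENNReal.ofReal_mul zero_le_two,
      ← ENNReal.ofReal_mul zero_le_two, ← ENNReal.ofReal_add (by positivity) (by positivity)]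
    exact ENNReal.ofReal_le_ofReal (by nlinarith [sq_nonneg (f ω + g ω)])
  have hle : ∫⁻ ω, ENNReal.ofReal ((f ω - g ω) ^ 2) ∂P ≤ ENNReal.ofReal (2 * (c + d)) :=
    calc ∫⁻ ω, ENNReal.ofReal ((f ω - g ω) ^ 2) ∂P
        ≤ ∫⁻ ω, 2 * ENNReal.ofReal (f ω ^ 2) + 2 * ENNReal.ofReal (g ω ^ 2) ∂P := lintegral_mono hpt
      _ = 2 * ∫⁻ ω, ENNReal.ofReal (f ω ^ 2) ∂P + 2 * ∫⁻ ω, ENNReal.ofReal (g ω ^ 2) ∂P := by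
        rw [lintegral_add_left' (by fun_prop), lintegral_const_mul' _ _ (by simp),
          lintegral_const_mul' _ _ (by simp)]
      _ ≤ 2 * ENNReal.ofReal c + 2 * ENNReal.ofReal d := by gcongr
      _ = ENNReal.ofReal (2 * (c + d)) := by
        rw [ENNReal.ofReal_mul zero_le_two, ENNReal.ofReal_add hc hd, ENNReal.ofReal_ofNat, mul_add]
  calc ∫ ω, (f ω - g ω) ^ 2 ∂P ≤ ‖∫ ω, (f ω - g ω) ^ 2 ∂P‖ₑ.toReal := by
        rw [toReal_enorm]
        exact Real.le_norm_self _
    _ ≤ 2 * (c + d) := by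
        refine ENNReal.toReal_le_of_le_ofReal (by positivity) ?_
        refine (enorm_integral_le_lintegral_enorm _).trans ?_
        simpa only [Real.enorm_eq_ofReal (sq_nonneg _)] using hle

theorem stmt_19_general {Ω : Type*} [MeasurableSpace Ω] (P : Measure Ω) [IsProbabilityMeasure P]
    (W : ℝ → Ω → ℝ) (N : ℝ → Ω → ℕ)
    (hWmeas : ∀ s, Measurable (W s)) (hNmeas : ∀ s, Measurable (N s))
    (hGauss : ∀ s t : ℝ, 0 ≤ s → 0 ≤ t →
      P.map (fun ω => W s ω - W t ω) = gaussianReal 0 (|s - t|).toNNReal)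
    (hPoisson : ∀ s : ℝ, 0 ≤ s → P.map (N s) = poissonMeasure s.toNNReal)
    (hIndep : IndepFun (fun ω => (fun s => W s ω : ℝ → ℝ)) (fun ω => (fun s => N s ω : ℝ → ℕ)) P)
    (T : ℝ) (hT : 1 ≤ T) :
    ∃ C > 0, ∀ a b ε : ℝ, 0 ≤ b → b < a → a ≤ T → 0 < ε → ε < 1 →
      (∫ ω, |W a ω - W b ω - W (ε * N (a / ε) ω) ω + W (ε * N (b / ε) ω) ω| ^ 2 ∂P) ≤
        C * ε ^ (1 / 2 : ℝ) := by
  refine ⟨4 * √T, mul_pos four_pos (Real.sqrt_pos.mpr (by linarith)),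
    fun a b ε hb hba haT hε _ ↦ ?_⟩
  have hA := lintegral_sq_sub_poisson_time_le hWmeas hNmeas hGauss hPoisson hIndep
    (hb.trans hba.le) hε
  have hB := lintegral_sq_sub_poisson_time_le hWmeas hNmeas hGauss hPoisson hIndep hb hε
  have hmeas := ((hWmeas a).sub (measurable_apply_nat_time hWmeas (hNmeas (a / ε))
    (fun n ↦ ε * n))).aemeasurable (μ := P)
  have hsqrt : ∀ t ≤ T, √(ε * t) ≤ √T * ε ^ (1 / 2 : ℝ) := fun t ht ↦ by
    rw [← Real.sqrt_eq_rpow, ← Real.sqrt_mul' _ hε.le, mul_comm T]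
    gcongr
  calc ∫ ω, |W a ω - W b ω - W (ε * N (a / ε) ω) ω + W (ε * N (b / ε) ω) ω| ^ 2 ∂P
      = ∫ ω, ((W a ω - W (ε * N (a / ε) ω) ω) - (W b ω - W (ε * N (b / ε) ω) ω)) ^ 2 ∂P := by
        congr with ω
        rw [sq_abs]
        ring
    _ ≤ 2 * (√(ε * a) + √(ε * b)) :=
        integral_sq_sub_le_of_lintegral_sq_le hmeas (Real.sqrt_nonneg _) (Real.sqrt_nonneg _) hA hB
    _ ≤ 4 * √T * ε ^ (1 / 2 : ℝ) := by
        linarith [hsqrt a haT, hsqrt b (hba.le.trans haT)]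

/-- Let `W` be a standard Brownian motion independent of a rate-1 Poisson process `N`,
and `N_t^ε = ε N_{t/ε}`, with times in a fixed bounded interval `[0,T]`, `T ≥ 1`.
Then for `0 ≤ b < a ≤ T` and `ε ∈ (0,1)`,
`E|W_a - W_b - W_{N_a^ε} + W_{N_b^ε}|² ≤ C ε^{1/2}` with `C` independent of `a, b, ε`. -/
theorem stmt_19 {Ω : Type*} [MeasurableSpace Ω] (P : Measure Ω) [IsProbabilityMeasure P]
    (W : ℝ → Ω → ℝ) (N : ℝ → Ω → ℕ)
    (hWmeas : ∀ s, Measurable (W s)) (hNmeas : ∀ s, Measurable (N s))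
    (hW0 : ∀ ω, W 0 ω = 0)
    (hGauss : ∀ s t : ℝ, 0 ≤ s → 0 ≤ t →
      P.map (fun ω => W s ω - W t ω) = gaussianReal 0 (|s - t|).toNNReal)
    (hPoisson : ∀ s : ℝ, 0 ≤ s → P.map (N s) = poissonMeasure s.toNNReal)
    (hIndep : IndepFun (fun ω => (fun s => W s ω : ℝ → ℝ)) (fun ω => (fun s => N s ω : ℝ → ℕ)) P)
    (T : ℝ) (hT : 1 ≤ T) :
    ∃ C > 0, ∀ a b ε : ℝ, 0 ≤ b → b < a → a ≤ T → 0 < ε → ε < 1 →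
      (∫ ω, |W a ω - W b ω - W (ε * N (a / ε) ω) ω + W (ε * N (b / ε) ω) ω| ^ 2 ∂P) ≤
        C * ε ^ (1 / 2 : ℝ) :=
  stmt_19_general P W N hWmeas hNmeas hGauss hPoisson hIndep T hT
end
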